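/- arXiv:2412.14431 — 6 statements merged into one kernel-verified Lean document; each statement's English description precedes it below -/
import Mathlib

section
/- If v_i and v_r are orthonormal vectors in R^n, P is an n×p real matrix, and the projected vectors satisfy (1-α)‖v_i+v_r‖ ≤ ‖Pᵀv_i + Pᵀv_r‖ ≤ (1+α)‖v_i+v_r‖ and (1-α)‖v_i−v_r‖ ≤ ‖Pᵀv_i − Pᵀv_r‖ ≤ (1+α)‖v_i−v_r‖ for some α ∈ (0,1), then |(Pᵀv_i)ᵀ(Pᵀv_r)| ≤ 2α. -/
open scoped RealInnerProductSpace Matrix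

/- By polarization `4⟪u, v⟫ = ‖u + v‖² - ‖u - v‖²`. For orthonormal `vi, vr` both `vi + vr` and
`vi - vr` have norm `√2`, so the distortion bounds put both squared norms of the projected vectors
in `[2(1 - α)², 2(1 + α)²]`, whose width is `8α`. -/

section

variable {F : Type*} [NormedAddCommGroup F] [InnerProductSpace ℝ F]

theorem real_inner_eq_norm_add_sq_sub_norm_sub_sq_div_four (u v : F) :
    ⟪u, v⟫ = (‖u + v‖ ^ 2 - ‖u - v‖ ^ 2) / 4 := by
  rw [norm_add_sq_real, norm_sub_sq_real]
  ring

theorem abs_real_inner_le_of_norm_add_of_norm_sub_near {u v : F} {c α : ℝ} (hc : 0 ≤ c)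
    (hα : α ≤ 1)
    (h1 : (1 - α) * c ≤ ‖u + v‖) (h2 : ‖u + v‖ ≤ (1 + α) * c)
    (h3 : (1 - α) * c ≤ ‖u - v‖) (h4 : ‖u - v‖ ≤ (1 + α) * c) :
    |⟪u, v⟫| ≤ α * c ^ 2 := by
  have hlow : 0 ≤ (1 - α) * c := mul_nonneg (by linarith) hc
  have hadd_low := pow_le_pow_left₀ hlow h1 2
  have hadd_up := pow_le_pow_left₀ (norm_nonneg _) h2 2
  have hsub_low := pow_le_pow_left₀ hlow h3 2
  have hsub_up := pow_le_pow_left₀ (norm_nonneg _) h4 2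
  rw [real_inner_eq_norm_add_sq_sub_norm_sub_sq_div_four, abs_le]
  constructor <;> nlinarith

theorem norm_add_eq_sqrt_two_of_orthonormal {x y : F} (hx : ‖x‖ = 1) (hy : ‖y‖ = 1)
    (hxy : ⟪x, y⟫ = 0) : ‖x + y‖ = √2 := by
  rw [norm_add_eq_sqrt_iff_real_inner_eq_zero.2 hxy, hx, hy]
  norm_num

theorem norm_sub_eq_sqrt_two_of_orthonormal {x y : F} (hx : ‖x‖ = 1) (hy : ‖y‖ = 1)
    (hxy : ⟪x, y⟫ = 0) : ‖x - y‖ = √2 := by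
  rw [norm_sub_eq_sqrt_iff_real_inner_eq_zero.2 hxy, hx, hy]
  norm_num

end

theorem stmt_0_general {n p : ℕ} (vi vr : EuclideanSpace ℝ (Fin n))
    (α : ℝ) (hα1 : α < 1)
    (hvi : ‖vi‖ = 1) (hvr : ‖vr‖ = 1) (horth : ⟪vi, vr⟫ = 0)
    (vih vrh : EuclideanSpace ℝ (Fin p))
    (h1 : (1 - α) * ‖vi + vr‖ ≤ ‖vih + vrh‖) (h2 : ‖vih + vrh‖ ≤ (1 + α) * ‖vi + vr‖)
    (h3 : (1 - α) * ‖vi - vr‖ ≤ ‖vih - vrh‖) (h4 : ‖vih - vrh‖ ≤ (1 + α) * ‖vi - vr‖) :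
    |⟪vih, vrh⟫| ≤ 2 * α := by
  rw [norm_add_eq_sqrt_two_of_orthonormal hvi hvr horth] at h1 h2
  rw [norm_sub_eq_sqrt_two_of_orthonormal hvi hvr horth] at h3 h4
  have h := abs_real_inner_le_of_norm_add_of_norm_sub_near (Real.sqrt_nonneg 2) hα1.le h1 h2 h3 h4
  rwa [Real.sq_sqrt zero_le_two, mul_comm] at h

/-- If `vi, vr` are orthonormal vectors in `ℝ^n`, `P` an `n × p` real matrix, and the projected
vectors `v̂i = Pᵀ vi`, `v̂r = Pᵀ vr` approximately preserve the norms of `vi + vr` and `vi - vr`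
up to distortion `α ∈ (0,1)`, then `|⟪v̂i, v̂r⟫| ≤ 2α`. -/
theorem stmt_0 {n p : ℕ} (vi vr : EuclideanSpace ℝ (Fin n))
    (P : Matrix (Fin n) (Fin p) ℝ) (α : ℝ) (hα : 0 < α) (hα1 : α < 1)
    (hvi : ‖vi‖ = 1) (hvr : ‖vr‖ = 1) (horth : ⟪vi, vr⟫ = 0)
    (vih vrh : EuclideanSpace ℝ (Fin p))
    (hvih : vih = (WithLp.equiv 2 (Fin p → ℝ)).symm (Matrix.mulVec Pᵀ vi))
    (hvrh : vrh = (WithLp.equiv 2 (Fin p → ℝ)).symm (Matrix.mulVec Pᵀ vr))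
    (h1 : (1 - α) * ‖vi + vr‖ ≤ ‖vih + vrh‖) (h2 : ‖vih + vrh‖ ≤ (1 + α) * ‖vi + vr‖)
    (h3 : (1 - α) * ‖vi - vr‖ ≤ ‖vih - vrh‖) (h4 : ‖vih - vrh‖ ≤ (1 + α) * ‖vi - vr‖) :
    |⟪vih, vrh⟫| ≤ 2 * α :=
  stmt_0_general vi vr α hα1 hvi hvr horth vih vrh h1 h2 h3 h4
end

section
/- Suppose the Hessian H = ∇²f(x) is symmetric with rank r, eigenvalues λ_1 ≥ ⋯ ≥ λ_r with orthonormal eigenvectors v_1,…,v_r, and ‖H‖ ≤ M. Let P ∈ R^{n×p} satisfy ‖Pᵀv_r‖ ≥ 1−α and (v̂_iᵀ v̂_r)² ≤ 4α² for all i < r, where v̂_i = Pᵀv_i and α ∈ (0,1). If −λ_r ≥ ε > 0 and θ := (1−α)² − 4M(r−1)α²/(ε(1−α)²) > 0, then −λ_min(PᵀHP) ≥ θ·ε. -/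
/-!
Test the compressed Hessian `PᵀHP` on `w = Pᵀ v_r = v̂_r` and write `s = ‖v̂_r‖²`. Since
`wᵀ PᵀHP w = (Pw)ᵀ H (Pw) = ∑ᵢ λᵢ ⟪v̂ᵢ, v̂_r⟫²`, the term `i = r` contributes `λ_r s² ≤ -ε s²`,
and each of the other `r - 1` terms at most `4Mα²`, because `|λᵢ| ≤ ‖H‖ ≤ M`. The Rayleigh bound
`λ_min s ≤ wᵀ PᵀHP w` then gives `λ_min ≤ -ε s + K / s` with `K = 4M(r-1)α²`, and `s ≥ (1-α)²`
turns this into `λ_min ≤ -θε`.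
-/

open scoped RealInnerProductSpace Matrix

open scoped MatrixOrder in
theorem Matrix.IsHermitian.iInf_eigenvalues_mul_dotProduct_self_le {m : Type*} [Fintype m]
    [DecidableEq m] {A : Matrix m m ℝ} (hA : A.IsHermitian) (x : m → ℝ) :
    (⨅ j, hA.eigenvalues j) * (x ⬝ᵥ x) ≤ x ⬝ᵥ (A *ᵥ x) := by
  have hle : algebraMap ℝ _ (⨅ j, hA.eigenvalues j) ≤ A := by
    rw [algebraMap_le_iff_le_spectrum hA.isSelfAdjoint, hA.spectrum_real_eq_range_eigenvalues]
    rintro _ ⟨j, rfl⟩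
    exact ciInf_le (Finite.bddBelow_range _) j
  simpa [Matrix.sub_mulVec, dotProduct_sub, Algebra.algebraMap_eq_smul_one, Matrix.smul_mulVec]
    using (Matrix.le_iff.mp hle).dotProduct_mulVec_nonneg x

theorem ContinuousLinearMap.norm_le_opNorm_of_apply_eq_smul {𝕜 E : Type*}
    [NontriviallyNormedField 𝕜] [NormedAddCommGroup E] [NormedSpace 𝕜 E] (T : E →L[𝕜] E)
    {x : E} (hx : x ≠ 0) {c : 𝕜} (h : T x = c • x) : ‖c‖ ≤ ‖T‖ := by
  refine le_of_mul_le_mul_right ?_ (norm_pos_iff.mpr hx)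
  simpa [h, norm_smul] using T.le_opNorm x

namespace Matrix

variable {m k ι : Type*} [Fintype m] [Fintype ι]

theorem dotProduct_transpose_mul_mul_mulVec [Fintype k] (P : Matrix m k ℝ) (H : Matrix m m ℝ)
    (x : k → ℝ) : x ⬝ᵥ ((Pᵀ * H * P) *ᵥ x) = (P *ᵥ x) ⬝ᵥ (H *ᵥ (P *ᵥ x)) := by
  rw [← mulVec_mulVec, ← mulVec_mulVec, dotProduct_mulVec, vecMul_transpose]

theorem dotProduct_sum_smul_vecMulVec_self_mulVec (c : ι → ℝ) (u : ι → m → ℝ) (z : m → ℝ) :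
    z ⬝ᵥ ((∑ i, c i • vecMulVec (u i) (u i)) *ᵥ z) = ∑ i, c i * (u i ⬝ᵥ z) ^ 2 := by
  rw [sum_mulVec, dotProduct_sum]
  refine Finset.sum_congr rfl fun i _ ↦ ?_
  rw [smul_mulVec, vecMulVec_mulVec, op_smul_eq_smul, dotProduct_smul, dotProduct_smul,
    smul_eq_mul, smul_eq_mul, dotProduct_comm z]
  ring

theorem toEuclideanCLM_sum_smul_vecMulVec_self_of_orthonormal [DecidableEq m] (c : ι → ℝ)
    {v : ι → EuclideanSpace ℝ m} (hv : Orthonormal ℝ v) (j : ι) :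
    toEuclideanCLM (𝕜 := ℝ) (∑ i, c i • vecMulVec (v i) (v i)) (v j) = c j • v j := by
  classical
  have hdot : ∀ i, v i ⬝ᵥ v j = if i = j then 1 else 0 := fun i ↦ by
    rw [← orthonormal_iff_ite.mp hv i j, EuclideanSpace.inner_eq_star_dotProduct, star_trivial,
      dotProduct_comm]
  refine WithLp.ofLp_injective 2 ?_
  rw [ofLp_toEuclideanCLM, sum_mulVec, Finset.sum_eq_single j]
  · rw [smul_mulVec, vecMulVec_mulVec, hdot, if_pos rfl, op_smul_eq_smul, one_smul,
      WithLp.ofLp_smul]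
  · intro i _ hij
    rw [smul_mulVec, vecMulVec_mulVec, hdot, if_neg hij, op_smul_eq_smul, zero_smul, smul_zero]
  · exact fun h ↦ (h (Finset.mem_univ j)).elim

end Matrix

theorem Finset.sum_mul_sq_le_of_abs_le {ι : Type*} [Fintype ι] [DecidableEq ι] {lam c : ι → ℝ}
    {M δ : ℝ} (hM : ∀ i, |lam i| ≤ M) (j : ι) (hc : ∀ i ∈ univ.erase j, c i ^ 2 ≤ δ) :
    ∑ i, lam i * c i ^ 2 ≤ lam j * c j ^ 2 + (Fintype.card ι - 1) * (M * δ) := by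
  have hM0 : 0 ≤ M := (abs_nonneg _).trans (hM j)
  have hterm : ∀ i ∈ univ.erase j, lam i * c i ^ 2 ≤ M * δ := fun i hi ↦
    calc lam i * c i ^ 2 ≤ M * c i ^ 2 :=
          mul_le_mul_of_nonneg_right ((le_abs_self _).trans (hM i)) (sq_nonneg _)
      _ ≤ M * δ := mul_le_mul_of_nonneg_left (hc i hi) hM0
  rw [← add_sum_erase _ _ (mem_univ j)]
  gcongr
  calc ∑ i ∈ univ.erase j, lam i * c i ^ 2 ≤ ∑ _i ∈ univ.erase j, M * δ := sum_le_sum hterm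
    _ = (Fintype.card ι - 1) * (M * δ) := by
      rw [sum_const, card_erase_of_mem (mem_univ j), card_univ, nsmul_eq_mul,
        Nat.cast_sub (Fintype.card_pos_iff.mpr ⟨j⟩), Nat.cast_one]

theorem sub_div_mul_le_neg_of_mul_le {μ s ε β K : ℝ} (hε : 0 < ε) (hβ : 0 < β) (hβs : β ≤ s)
    (hK : 0 ≤ K) (h : μ * s ≤ -ε * s ^ 2 + K) : (β - K / (ε * β)) * ε ≤ -μ := by
  have hs : 0 < s := hβ.trans_le hβs
  have key : (β - K / (ε * β)) * ε * s ≤ ε * s ^ 2 - K := by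
    have hnonneg : 0 ≤ (s - β) * (ε * s + K / β) := by
      apply mul_nonneg <;> [linarith; positivity]
    have hsplit : (β - K / (ε * β)) * ε * s = ε * s ^ 2 - K - (s - β) * (ε * s + K / β) := by
      field_simp; ring
    linarith
  exact le_of_mul_le_mul_right (by linarith) hs

theorem stmt_2_general {n p r : ℕ}
    (H : Matrix (Fin n) (Fin n) ℝ)
    (lam : Fin r → ℝ)
    (v : Fin r → EuclideanSpace ℝ (Fin n)) (hv : Orthonormal ℝ v)
    (hdecomp : H = ∑ i : Fin r, lam i • Matrix.vecMulVec (v i) (v i))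
    (M : ℝ) (hM : ‖Matrix.toEuclideanCLM (𝕜 := ℝ) H‖ ≤ M)
    (P : Matrix (Fin n) (Fin p) ℝ)
    (vhat : Fin r → EuclideanSpace ℝ (Fin p))
    (hvhat : ∀ i, vhat i = (WithLp.equiv 2 (Fin p → ℝ)).symm (Matrix.mulVec Pᵀ (v i)))
    (last : Fin r)
    (α : ℝ) (hα1 : α < 1)
    (halign : 1 - α ≤ ‖vhat last‖)
    (hortho : ∀ i ∈ Finset.univ.erase last, (⟪vhat i, vhat last⟫) ^ 2 ≤ 4 * α ^ 2)
    (ε : ℝ) (hε : 0 < ε) (hcurv : ε ≤ -lam last)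
    (θ : ℝ) (hθdef : θ = (1 - α) ^ 2 - 4 * M * (r - 1) * α ^ 2 / (ε * (1 - α) ^ 2))
    (hPHP : (Pᵀ * H * P).IsHermitian) :
    θ * ε ≤ -(⨅ j : Fin p, hPHP.eigenvalues j) := by
  have hinner : ∀ i, v i ⬝ᵥ (P *ᵥ vhat last) = ⟪vhat i, vhat last⟫ := fun i ↦ by
    rw [EuclideanSpace.inner_eq_star_dotProduct, star_trivial, hvhat, hvhat,
      Matrix.dotProduct_mulVec, ← Matrix.mulVec_transpose, dotProduct_comm]
    rfl
  have hquad :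
      vhat last ⬝ᵥ ((Pᵀ * H * P) *ᵥ vhat last) = ∑ i, lam i * ⟪vhat i, vhat last⟫ ^ 2 := by
    simp only [Matrix.dotProduct_transpose_mul_mul_mulVec, hdecomp,
      Matrix.dotProduct_sum_smul_vecMulVec_self_mulVec, hinner]
  have hnorm : vhat last ⬝ᵥ vhat last = ‖vhat last‖ ^ 2 := by
    rw [← real_inner_self_eq_norm_sq, EuclideanSpace.inner_eq_star_dotProduct, star_trivial]
  have hlamM : ∀ i, |lam i| ≤ M := fun i ↦
    ((Matrix.toEuclideanCLM (𝕜 := ℝ) H).norm_le_opNorm_of_apply_eq_smul (hv.ne_zero i)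
      (hdecomp ▸ Matrix.toEuclideanCLM_sum_smul_vecMulVec_self_of_orthonormal lam hv i)).trans hM
  have hsum := Finset.sum_mul_sq_le_of_abs_le hlamM last hortho
  have hray := hPHP.iInf_eigenvalues_mul_dotProduct_self_le (vhat last)
  rw [hquad, hnorm] at hray
  rw [real_inner_self_eq_norm_sq, Fintype.card_fin] at hsum
  have hr : (1 : ℝ) ≤ r := by exact_mod_cast last.pos
  have hM0 : 0 ≤ M := (abs_nonneg _).trans (hlamM last)
  have hcurv' : lam last * (‖vhat last‖ ^ 2) ^ 2 ≤ -ε * (‖vhat last‖ ^ 2) ^ 2 :=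
    mul_le_mul_of_nonneg_right (by linarith) (by positivity)
  subst hθdef
  refine sub_div_mul_le_neg_of_mul_le hε (pow_pos (sub_pos.mpr hα1) 2)
    (pow_le_pow_left₀ (sub_pos.mpr hα1).le halign 2) (by positivity) ?_
  linarith

/-- Negative-curvature case of Lemma 3.5: if the Hessian `H = ∇²f(x)` is symmetric with rank `r`,
eigendecomposition `H = ∑ᵢ λᵢ vᵢ vᵢᵀ` (decreasing eigenvalues, orthonormal eigenvectors),
`‖H‖ ≤ M` (operator 2-norm), `P` satisfies `‖Pᵀ v_r‖ ≥ 1-α` and `(v̂ᵢᵀ v̂ᵣ)² ≤ 4α²` for `i < r`,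
`-λ_r ≥ ε > 0` and `θ := (1-α)² - 4M(r-1)α²/(ε(1-α)²) > 0`, then `-λ_min(PᵀHP) ≥ θ ε`. -/
theorem stmt_2 {n p r : ℕ} [NeZero p] (hr : 0 < r)
    (H : Matrix (Fin n) (Fin n) ℝ) (hH : H.IsHermitian) (hrank : H.rank = r)
    (lam : Fin r → ℝ) (hlam : Antitone lam)
    (v : Fin r → EuclideanSpace ℝ (Fin n)) (hv : Orthonormal ℝ v)
    (hdecomp : H = ∑ i : Fin r, lam i • Matrix.vecMulVec (v i) (v i))
    (M : ℝ) (hM : ‖Matrix.toEuclideanCLM (𝕜 := ℝ) H‖ ≤ M)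
    (P : Matrix (Fin n) (Fin p) ℝ)
    (vhat : Fin r → EuclideanSpace ℝ (Fin p))
    (hvhat : ∀ i, vhat i = (WithLp.equiv 2 (Fin p → ℝ)).symm (Matrix.mulVec Pᵀ (v i)))
    (last : Fin r) (hlast : (last : ℕ) = r - 1)
    (α : ℝ) (hα : 0 < α) (hα1 : α < 1)
    (halign : 1 - α ≤ ‖vhat last‖)
    (hortho : ∀ i ∈ Finset.univ.erase last, (⟪vhat i, vhat last⟫) ^ 2 ≤ 4 * α ^ 2)
    (ε : ℝ) (hε : 0 < ε) (hcurv : ε ≤ -lam last)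
    (θ : ℝ) (hθdef : θ = (1 - α) ^ 2 - 4 * M * (r - 1) * α ^ 2 / (ε * (1 - α) ^ 2))
    (hθ : 0 < θ)
    (hPHP : (Pᵀ * H * P).IsHermitian) :
    θ * ε ≤ -(⨅ j : Fin p, hPHP.eigenvalues j) :=
  stmt_2_general H lam v hv hdecomp M hM P vhat hvhat last α hα1 halign hortho ε hε hcurv θ hθdef
    hPHP
end

section
/- Suppose a model m satisfies the fully-quadratic error bound |f(x+Ps) − m(s)| ≤ κ_ef·Δ³ for all ‖s‖ ≤ Δ, the step s* satisfies m(0) − m(s*) ≥ κ_s·σ^m·Δ² with σ^m > 0, and Δ ≤ (κ_s(1−η)/κ_ef)·σ^m for some η ∈ (0,1). Then the ratio R = (f(x) − f(x+Ps*))/(m(0) − m(s*)) satisfies R ≥ η. -/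
open scoped Matrix

/-- Negative-curvature case of Lemma 3.3: if the model error satisfies
`|f(x+Ps) - m(s)| ≤ κ_ef Δ³` for all `‖s‖ ≤ Δ`, `m(0) = f(x)`, the step gives decrease
`m(0) - m(s*) ≥ κ_s σᵐ Δ²` with `σᵐ > 0`, and `Δ ≤ (κ_s(1-η)/κ_ef) σᵐ`, then the ratio
`R = (f(x) - f(x+Ps*))/(m(0) - m(s*))` satisfies `R ≥ η`. -/
theorem stmt_6 {n p : ℕ} (f : EuclideanSpace ℝ (Fin n) → ℝ)
    (P : Matrix (Fin n) (Fin p) ℝ) (x : EuclideanSpace ℝ (Fin n))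
    (m : EuclideanSpace ℝ (Fin p) → ℝ)
    (Δ κef κs σm η : ℝ) (hΔ : 0 < Δ) (hκef : 0 < κef) (hκs : 0 < κs) (hσm : 0 < σm)
    (hη : 0 < η) (hη1 : η < 1)
    (herr : ∀ s : EuclideanSpace ℝ (Fin p), ‖s‖ ≤ Δ →
      |f (x + (WithLp.equiv 2 (Fin n → ℝ)).symm (P.mulVec (WithLp.equiv 2 (Fin p → ℝ) s))) - m s|
        ≤ κef * Δ ^ 3)
    (hm0 : m 0 = f x)
    (sstar : EuclideanSpace ℝ (Fin p)) (hsstar : ‖sstar‖ ≤ Δ)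
    (hdec : m 0 - m sstar ≥ κs * σm * Δ ^ 2)
    (hΔsmall : Δ ≤ (κs * (1 - η) / κef) * σm) :
    (f x - f (x + (WithLp.equiv 2 (Fin n → ℝ)).symm
        (P.mulVec (WithLp.equiv 2 (Fin p → ℝ) sstar)))) / (m 0 - m sstar) ≥ η := by
  have h1 := herr sstar hsstar
  set y := f (x + (WithLp.equiv 2 (Fin n → ℝ)).symm
      (P.mulVec (WithLp.equiv 2 (Fin p → ℝ) sstar))) with hy
  have habs := abs_le.mp h1
  have hD : (0:ℝ) < m 0 - m sstar :=
    lt_of_lt_of_le (by positivity) hdec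
  rw [ge_iff_le, le_div_iff₀ hD]
  have hΔ' : κef * Δ ≤ κs * (1 - η) * σm := by
    have := mul_le_mul_of_nonneg_left hΔsmall hκef.le
    calc κef * Δ ≤ κef * ((κs * (1 - η) / κef) * σm) := this
    _ = κs * (1 - η) * σm := by field_simp
  nlinarith [mul_le_mul_of_nonneg_right hΔ' (sq_nonneg Δ), mul_le_mul_of_nonneg_left hdec (by linarith : (0:ℝ) ≤ 1 - η)]
end

section
/- Suppose a model m satisfies |f(x+Ps) − m(s)| ≤ κ_ef·Δ³ for all ‖s‖ ≤ Δ with Δ ≤ Δ_max, the step s* satisfies m(0) − m(s*) ≥ κ_s·σ^m·Δ with σ^m > 0, and Δ ≤ (κ_s(1−η)/(κ_ef·Δ_max))·σ^m for some η ∈ (0,1). Then R = (f(x) − f(x+Ps*))/(m(0) − m(s*)) ≥ η. -/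
open scoped Matrix

/-- Gradient-dominated case of Lemma 3.3: if the model error satisfies
`|f(x+Ps) - m(s)| ≤ κ_ef Δ³` for all `‖s‖ ≤ Δ`, `m(0) = f(x)`, the step gives decrease
`m(0) - m(s*) ≥ κ_s σᵐ Δ` with `σᵐ > 0`, and `Δ ≤ Δ_max` and `Δ ≤ (κ_s(1-η)/(κ_ef Δ_max)) σᵐ`, then the ratio
`R = (f(x) - f(x+Ps*))/(m(0) - m(s*))` satisfies `R ≥ η`. -/
theorem stmt_7 {n p : ℕ} (f : EuclideanSpace ℝ (Fin n) → ℝ)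
    (P : Matrix (Fin n) (Fin p) ℝ) (x : EuclideanSpace ℝ (Fin n))
    (m : EuclideanSpace ℝ (Fin p) → ℝ)
    (Δ Δmax κef κs σm η : ℝ) (hΔ : 0 < Δ) (hΔmax : Δ ≤ Δmax) (hκef : 0 < κef) (hκs : 0 < κs) (hσm : 0 < σm)
    (hη : 0 < η) (hη1 : η < 1)
    (herr : ∀ s : EuclideanSpace ℝ (Fin p), ‖s‖ ≤ Δ →
      |f (x + (WithLp.equiv 2 (Fin n → ℝ)).symm (P.mulVec (WithLp.equiv 2 (Fin p → ℝ) s))) - m s|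
        ≤ κef * Δ ^ 3)
    (hm0 : m 0 = f x)
    (sstar : EuclideanSpace ℝ (Fin p)) (hsstar : ‖sstar‖ ≤ Δ)
    (hdec : m 0 - m sstar ≥ κs * σm * Δ)
    (hΔsmall : Δ ≤ (κs * (1 - η) / (κef * Δmax)) * σm) :
    (f x - f (x + (WithLp.equiv 2 (Fin n → ℝ)).symm
        (P.mulVec (WithLp.equiv 2 (Fin p → ℝ) sstar)))) / (m 0 - m sstar) ≥ η := by
  set y := f (x + (WithLp.equiv 2 (Fin n → ℝ)).symm
        (P.mulVec (WithLp.equiv 2 (Fin p → ℝ) sstar))) with hy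
  have herrs := herr sstar hsstar
  rw [← hy] at herrs
  have habs := abs_le.mp herrs
  have hDpos : 0 < m 0 - m sstar := lt_of_lt_of_le (by positivity) hdec
  rw [ge_iff_le, le_div_iff₀ hDpos, hm0]
  have hΔmaxpos : 0 < Δmax := lt_of_lt_of_le hΔ hΔmax
  have hkey : κef * Δ ^ 2 ≤ (1 - η) * κs * σm := by
    have h1 : κef * Δmax * Δ ≤ κs * (1 - η) * σm := by
      have := mul_le_mul_of_nonneg_left hΔsmall (le_of_lt (mul_pos hκef hΔmaxpos))
      calc κef * Δmax * Δ ≤ κef * Δmax * ((κs * (1 - η) / (κef * Δmax)) * σm) := this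
        _ = κs * (1 - η) * σm := by field_simp
    nlinarith [mul_le_mul_of_nonneg_left hΔmax (mul_pos hκef hΔ).le]
  have h2 : κef * Δ ^ 3 ≤ (1 - η) * (κs * σm * Δ) := by nlinarith
  nlinarith [habs.1]
end

section
/- Let (Δ_k)_{k=0}^{K} be a positive sequence with Δ₀ ≤ Δ₀ and updating rule: on 'successful' iterations k ∈ S, Δ_{k+1} ≤ γ_inc·Δ_k, and on 'unsuccessful' iterations k ∈ U, Δ_{k+1} = γ_dec·Δ_k, where 0 < γ_dec < 1 < γ_inc. Fix Δ ≤ Δ₀. Then the number of unsuccessful iterations k ≤ K with Δ_k ≥ γ_dec⁻¹Δ is at most (log γ_inc / log γ_dec⁻¹)·#{k ≤ K successful with Δ_k ≥ γ_inc⁻¹Δ} + log(Δ₀/Δ)/log γ_dec⁻¹. -/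
open Finset

/-- Inequality (40) of Lemma 3.10: with trust-region updating
`Δ_{k+1} ≤ γ_inc Δ_k` on successful and `Δ_{k+1} = γ_dec Δ_k` on unsuccessful iterations,
for any `Δ ≤ Δ₀` the number of unsuccessful iterations `k ≤ K` with `Δ_k ≥ γ_dec⁻¹ Δ` is at most
`(log γ_inc / log γ_dec⁻¹) ⬝ #{successful k ≤ K with Δ_k ≥ γ_inc⁻¹ Δ} + log(Δ₀/Δ)/log γ_dec⁻¹`. -/
theorem stmt_10 (K : ℕ) (Δ : ℕ → ℝ) (Δ0 : ℝ) (hΔ0 : Δ 0 = Δ0)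
    (hpos : ∀ k, 0 < Δ k)
    (γdec γinc : ℝ) (hγdec0 : 0 < γdec) (hγdec1 : γdec < 1) (hγinc : 1 < γinc)
    (S U : Finset ℕ) (hcover : Finset.range (K + 1) = S ∪ U) (hdisj : Disjoint S U)
    (hsucc : ∀ k ∈ S, Δ (k + 1) ≤ γinc * Δ k)
    (hunsucc : ∀ k ∈ U, Δ (k + 1) = γdec * Δ k)
    (D : ℝ) (hD : 0 < D) (hDle : D ≤ Δ0) :
    ((U.filter (fun k => γdec⁻¹ * D ≤ Δ k)).card : ℝ) ≤
      (Real.log γinc / Real.log γdec⁻¹) * ((S.filter (fun k => γinc⁻¹ * D ≤ Δ k)).card : ℝ) +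
        Real.log (Δ0 / D) / Real.log γdec⁻¹ := by
  set c := Real.log γdec⁻¹ with hc
  set b := Real.log γinc with hb
  have hcpos : 0 < c := by
    rw [hc, Real.log_inv]
    have := Real.log_neg hγdec0 hγdec1
    linarith
  have hbpos : 0 < b := Real.log_pos hγinc
  set φ : ℕ → ℝ := fun k => max (Real.log (Δ k / D)) 0 with hφ
  set Sf := S.filter (fun k => γinc⁻¹ * D ≤ Δ k) with hSf
  set Uf := U.filter (fun k => γdec⁻¹ * D ≤ Δ k) with hUf
  have key : ∀ k ∈ Finset.range (K+1),
      φ (k+1) - φ k ≤ (if k ∈ Sf then b else 0) - (if k ∈ Uf then c else 0) := by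
    intro k hk
    have hk' : k ∈ S ∪ U := by rw [← hcover]; exact hk
    have hΔk := hpos k
    have hΔk1 := hpos (k+1)
    have hφnn : (0:ℝ) ≤ φ k := le_max_right _ _
    rcases Finset.mem_union.mp hk' with hS | hU
    · have hkU : k ∉ Uf := fun h =>
        (Finset.disjoint_left.mp hdisj hS) (Finset.mem_filter.mp h).1
      rw [if_neg hkU]
      have hle : Real.log (Δ (k+1) / D) ≤ Real.log (Δ k / D) + b := by
        have h1 : Δ (k+1) / D ≤ γinc * Δ k / D :=
          div_le_div_of_nonneg_right (hsucc k hS) hD.le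
        have h2 := Real.log_le_log (by positivity) h1
        rw [mul_div_assoc, Real.log_mul (by positivity) (by positivity)] at h2
        linarith
      by_cases hSfk : k ∈ Sf
      · rw [if_pos hSfk]
        have h3 : φ (k+1) ≤ φ k + b := by
          apply max_le
          · exact hle.trans (by gcongr; exact le_max_left _ _)
          · positivity
        linarith
      · rw [if_neg hSfk]
        have hlt : Δ k < γinc⁻¹ * D := by
          by_contra h
          exact hSfk (Finset.mem_filter.mpr ⟨hS, le_of_not_gt h⟩)
        have hD1 : Δ (k+1) < D := by
          calc Δ (k+1) ≤ γinc * Δ k := hsucc k hS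
            _ < γinc * (γinc⁻¹ * D) := by
                apply mul_lt_mul_of_pos_left hlt (by linarith)
            _ = D := by field_simp
        have hlog : Real.log (Δ (k+1) / D) < 0 :=
          Real.log_neg (by positivity) ((div_lt_one hD).mpr hD1)
        have h4 : φ (k+1) = 0 := max_eq_right hlog.le
        simp only [h4]
        linarith
    · have hkS : k ∉ Sf := fun h =>
        (Finset.disjoint_right.mp hdisj hU) (Finset.mem_filter.mp h).1
      rw [if_neg hkS]
      have heq : Real.log (Δ (k+1) / D) = Real.log (Δ k / D) - c := by
        rw [hunsucc k hU, hc, Real.log_inv, mul_div_assoc,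
          Real.log_mul (ne_of_gt hγdec0) (by positivity)]
        ring
      by_cases hUfk : k ∈ Uf
      · rw [if_pos hUfk]
        have hge : γdec⁻¹ * D ≤ Δ k := (Finset.mem_filter.mp hUfk).2
        have h1 : D ≤ Δ (k+1) := by
          rw [hunsucc k hU]
          calc D = γdec * (γdec⁻¹ * D) := by field_simp
            _ ≤ γdec * Δ k := mul_le_mul_of_nonneg_left hge hγdec0.le
        have hL1 : 0 ≤ Real.log (Δ (k+1) / D) :=
          Real.log_nonneg ((one_le_div hD).mpr h1)
        have hφ1 : φ (k+1) = Real.log (Δ (k+1) / D) := max_eq_left hL1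
        have hL0 : 0 ≤ Real.log (Δ k / D) := by
          have := heq; linarith
        have hφ0 : φ k = Real.log (Δ k / D) := max_eq_left hL0
        rw [hφ1, hφ0, heq]
        linarith
      · rw [if_neg hUfk]
        have h5 : φ (k+1) ≤ φ k := by
          apply max_le
          · rw [heq]
            have := le_max_left (Real.log (Δ k / D)) (0:ℝ)
            linarith
          · exact le_max_right _ _
        linarith
  have hsum := Finset.sum_le_sum key
  rw [Finset.sum_range_sub (fun k => φ k)] at hsum
  have hSsub : Sf ⊆ Finset.range (K+1) := fun k hk => by
    rw [hcover]; exact Finset.mem_union_left _ (Finset.mem_filter.mp hk).1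
  have hUsub : Uf ⊆ Finset.range (K+1) := fun k hk => by
    rw [hcover]; exact Finset.mem_union_right _ (Finset.mem_filter.mp hk).1
  have hsumS : ∑ k ∈ Finset.range (K+1), (if k ∈ Sf then b else 0) = Sf.card * b := by
    rw [Finset.sum_ite_mem, Finset.inter_eq_right.mpr hSsub, Finset.sum_const,
      nsmul_eq_mul]
  have hsumU : ∑ k ∈ Finset.range (K+1), (if k ∈ Uf then c else 0) = Uf.card * c := by
    rw [Finset.sum_ite_mem, Finset.inter_eq_right.mpr hUsub, Finset.sum_const,
      nsmul_eq_mul]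
  rw [Finset.sum_sub_distrib, hsumS, hsumU] at hsum
  have hφK : (0:ℝ) ≤ φ (K+1) := le_max_right _ _
  have hφ0 : φ 0 = Real.log (Δ0 / D) := by
    simp only [hφ, hΔ0]
    exact max_eq_left (Real.log_nonneg ((one_le_div hD).mpr hDle))
  have hmain : (Uf.card : ℝ) * c ≤ b * Sf.card + Real.log (Δ0 / D) := by
    rw [hφ0] at hsum; linarith
  rw [div_mul_eq_mul_div, ← add_div, le_div_iff₀ hcpos]
  linarith
end

section
/- Let (Δ_k)_{k=0}^{K} be a positive sequence with initial value Δ₀ and updating rule: on successful iterations Δ_{k+1} = min(γ_inc·Δ_k, Δ_max) and on unsuccessful iterations Δ_{k+1} = γ_dec·Δ_k, where 0 < γ_dec < 1 < γ_inc and Δ_max ≥ Δ₀. Fix Δ ≤ min(Δ₀, γ_inc⁻¹Δ_max). Then #{k ≤ K successful with Δ_k < γ_inc⁻¹Δ} ≤ (log γ_dec⁻¹ / log γ_inc)·#{k ≤ K unsuccessful with Δ_k < γ_dec⁻¹Δ}. -/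
/-!
Track the potential `max 0 (log D - log Δ_k)`, the distance of `log Δ_k` below `log D`.
It starts at `0`, stays nonnegative, drops by exactly `log γ_inc` at every counted successful
step (there `γ_inc Δ_k < D ≤ γ_inc⁻¹ Δ_max`, so the cap `Δ_max` is inactive), rises by at most
`log γ_dec⁻¹` at every counted unsuccessful step, and never rises at any other step.
-/

open Finset

theorem card_filter_mul_le_card_filter_mul_of_potential {f : ℕ → ℝ} {K : ℕ} {S U : Finset ℕ}
    {p q : ℕ → Prop} [DecidablePred p] [DecidablePred q] {a b : ℝ}
    (hcover : range (K + 1) = S ∪ U) (hdisj : Disjoint S U) (hf : f 0 ≤ f (K + 1))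
    (hSp : ∀ k ∈ S, p k → f (k + 1) ≤ f k - a) (hSnp : ∀ k ∈ S, ¬ p k → f (k + 1) ≤ f k)
    (hUq : ∀ k ∈ U, q k → f (k + 1) ≤ f k + b) (hUnq : ∀ k ∈ U, ¬ q k → f (k + 1) ≤ f k) :
    #(S.filter p) * a ≤ #(U.filter q) * b := by
  have htelescope : 0 ≤ ∑ k ∈ S, (f (k + 1) - f k) + ∑ k ∈ U, (f (k + 1) - f k) := by
    rw [← sum_union hdisj, ← hcover, sum_range_sub]
    linarith
  have hS : ∑ k ∈ S, (f (k + 1) - f k) ≤ ∑ k ∈ S, if p k then -a else 0 := by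
    refine sum_le_sum fun k hk => ?_
    split_ifs with h
    · linarith [hSp k hk h]
    · linarith [hSnp k hk h]
  have hU : ∑ k ∈ U, (f (k + 1) - f k) ≤ ∑ k ∈ U, if q k then b else 0 := by
    refine sum_le_sum fun k hk => ?_
    split_ifs with h
    · linarith [hUq k hk h]
    · linarith [hUnq k hk h]
  rw [← sum_filter, sum_const, nsmul_eq_mul] at hS hU
  linarith

noncomputable def logDeficit (D x : ℝ) : ℝ := max 0 (Real.log D - Real.log x)

namespace logDeficit

variable {D x c : ℝ}

theorem nonneg : 0 ≤ logDeficit D x := le_max_left _ _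

theorem eq_zero_of_le (hD : 0 < D) (h : D ≤ x) : logDeficit D x = 0 :=
  max_eq_left (by linarith [Real.log_le_log hD h])

theorem mul_eq_sub (hc : 1 ≤ c) (hx : 0 < x) (h : c * x ≤ D) :
    logDeficit D (c * x) = logDeficit D x - Real.log c := by
  have hc0 : 0 < c := by linarith
  have hcx : Real.log (c * x) ≤ Real.log D := Real.log_le_log (by positivity) h
  have hlogc : 0 ≤ Real.log c := Real.log_nonneg hc
  rw [Real.log_mul hc0.ne' hx.ne'] at hcx
  simp only [logDeficit, Real.log_mul hc0.ne' hx.ne']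
  rw [max_eq_right (by linarith), max_eq_right (by linarith)]
  ring

theorem mul_le_add (hc0 : 0 < c) (hc1 : c ≤ 1) (hx : 0 < x) :
    logDeficit D (c * x) ≤ logDeficit D x + Real.log c⁻¹ := by
  have hlogc : Real.log c ≤ 0 := Real.log_nonpos hc0.le hc1
  simp only [logDeficit, Real.log_mul hc0.ne' hx.ne', Real.log_inv]
  exact max_le (by linarith [le_max_left 0 (Real.log D - Real.log x)])
    (by linarith [le_max_right 0 (Real.log D - Real.log x)])

end logDeficit

theorem stmt_11_general (K : ℕ) (Δ : ℕ → ℝ) (Δ0 Δmax : ℝ) (hΔ0 : Δ 0 = Δ0)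
    (hpos : ∀ k, 0 < Δ k)
    (γdec γinc : ℝ) (hγdec0 : 0 < γdec) (hγdec1 : γdec < 1) (hγinc : 1 < γinc)
    (S U : Finset ℕ) (hcover : Finset.range (K + 1) = S ∪ U) (hdisj : Disjoint S U)
    (hsucc : ∀ k ∈ S, Δ (k + 1) = min (γinc * Δ k) Δmax)
    (hunsucc : ∀ k ∈ U, Δ (k + 1) = γdec * Δ k)
    (D : ℝ) (hD : 0 < D) (hDle : D ≤ min Δ0 (γinc⁻¹ * Δmax)) :
    ((S.filter (fun k => Δ k < γinc⁻¹ * D)).card : ℝ) ≤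
      (Real.log γdec⁻¹ / Real.log γinc) * ((U.filter (fun k => Δ k < γdec⁻¹ * D)).card : ℝ) := by
  have hγinc0 : 0 < γinc := by linarith
  have hDΔ0 : D ≤ Δ0 := hDle.trans (min_le_left _ _)
  have hγincD : γinc * D ≤ Δmax := (le_inv_mul_iff₀ hγinc0).mp (hDle.trans (min_le_right _ _))
  have hDmax : D ≤ Δmax := by nlinarith
  have hcount := card_filter_mul_le_card_filter_mul_of_potential
    (f := fun k => logDeficit D (Δ k)) (a := Real.log γinc) (b := Real.log γdec⁻¹) hcover hdisj
    (p := fun k => Δ k < γinc⁻¹ * D) (q := fun k => Δ k < γdec⁻¹ * D)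
    (by simp only [hΔ0, logDeficit.eq_zero_of_le hD hDΔ0, logDeficit.nonneg])
    (fun k hk hlt => by
      have hlt' : γinc * Δ k < D := (lt_inv_mul_iff₀ hγinc0).mp hlt
      rw [hsucc k hk, min_eq_left (by linarith),
        logDeficit.mul_eq_sub hγinc.le (hpos k) hlt'.le])
    (fun k hk hge => by
      have hge' : D ≤ γinc * Δ k := (inv_mul_le_iff₀ hγinc0).mp (not_lt.mp hge)
      rw [hsucc k hk, logDeficit.eq_zero_of_le hD (le_min hge' hDmax)]
      exact logDeficit.nonneg)
    (fun k hk _ => hunsucc k hk ▸ logDeficit.mul_le_add hγdec0 hγdec1.le (hpos k))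
    (fun k hk hge => by
      have hge' : D ≤ γdec * Δ k := (inv_mul_le_iff₀ hγdec0).mp (not_lt.mp hge)
      rw [hunsucc k hk, logDeficit.eq_zero_of_le hD hge']
      exact logDeficit.nonneg)
  rw [div_mul_eq_mul_div, le_div_iff₀ (Real.log_pos hγinc)]
  linarith

/-- Inequality (41) of Lemma 3.10: with trust-region updating
`Δ_{k+1} = min(γ_inc Δ_k, Δ_max)` on successful and `Δ_{k+1} = γ_dec Δ_k` on unsuccessful
iterations, for any `Δ ≤ min(Δ₀, γ_inc⁻¹ Δ_max)`,
`#{successful k ≤ K with Δ_k < γ_inc⁻¹ Δ} ≤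
  (log γ_dec⁻¹ / log γ_inc) ⬝ #{unsuccessful k ≤ K with Δ_k < γ_dec⁻¹ Δ}`. -/
theorem stmt_11 (K : ℕ) (Δ : ℕ → ℝ) (Δ0 Δmax : ℝ) (hΔ0 : Δ 0 = Δ0) (hΔmax : Δ0 ≤ Δmax)
    (hpos : ∀ k, 0 < Δ k)
    (γdec γinc : ℝ) (hγdec0 : 0 < γdec) (hγdec1 : γdec < 1) (hγinc : 1 < γinc)
    (S U : Finset ℕ) (hcover : Finset.range (K + 1) = S ∪ U) (hdisj : Disjoint S U)
    (hsucc : ∀ k ∈ S, Δ (k + 1) = min (γinc * Δ k) Δmax)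
    (hunsucc : ∀ k ∈ U, Δ (k + 1) = γdec * Δ k)
    (D : ℝ) (hD : 0 < D) (hDle : D ≤ min Δ0 (γinc⁻¹ * Δmax)) :
    ((S.filter (fun k => Δ k < γinc⁻¹ * D)).card : ℝ) ≤
      (Real.log γdec⁻¹ / Real.log γinc) * ((U.filter (fun k => Δ k < γdec⁻¹ * D)).card : ℝ) :=
  stmt_11_general K Δ Δ0 Δmax hΔ0 hpos γdec γinc hγdec0 hγdec1 hγinc S U hcover hdisj hsucc hunsucc
    D hD hDle
end
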